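/- Fix β > 0 and K > 0. If ν ∈ P is a global minimum point over P of the function μ ↦ R(μ|ρ_β) − βK (μ₁ − μ₋₁)², then z̃ := ν₁ − ν₋₁ is a global minimum point over [−1,1] of the function z ↦ J_β(z) − βK z². -/
import Mathlib


noncomputable section

/-- `μ = (μ₋₁, μ₀, μ₁)` is a probability vector on `Λ = {-1,0,1}`. -/
def IsProbVec (μ : ℝ × ℝ × ℝ) : Prop :=
  0 ≤ μ.1 ∧ 0 ≤ μ.2.1 ∧ 0 ≤ μ.2.2 ∧ μ.1 + μ.2.1 + μ.2.2 = 1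

/-- The measure `ρ_β` with `ρ_β(±1) = e^{−β}/(1+2e^{−β})` and `ρ_β(0) = 1/(1+2e^{−β})`. -/
def rhoBeta (β : ℝ) : ℝ × ℝ × ℝ :=
  (Real.exp (-β) / (1 + 2 * Real.exp (-β)),
   1 / (1 + 2 * Real.exp (-β)),
   Real.exp (-β) / (1 + 2 * Real.exp (-β)))

/-- Relative entropy `R(μ|ρ_β) = Σᵢ μᵢ log(μᵢ/ρ_β(i))` (the convention
`0 · log 0 = 0` holds automatically since `Real.log 0 = 0`). -/
def relEntB (β : ℝ) (μ : ℝ × ℝ × ℝ) : ℝ :=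
  μ.1 * Real.log (μ.1 / (rhoBeta β).1) + μ.2.1 * Real.log (μ.2.1 / (rhoBeta β).2.1)
    + μ.2.2 * Real.log (μ.2.2 / (rhoBeta β).2.2)

/-- `c_β(t) = log[(1 + e^{−β}(e^t + e^{−t}))/(1 + 2e^{−β})]`. -/
def cBeta (β t : ℝ) : ℝ :=
  Real.log ((1 + Real.exp (-β) * (Real.exp t + Real.exp (-t))) / (1 + 2 * Real.exp (-β)))

/-- `J_β(z) = sup_{t ∈ ℝ} {t z − c_β(t)}`, the Legendre–Fenchel transform of `c_β`
(finite on `[-1,1]`, where it is used below). -/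
def Jbeta (β z : ℝ) : ℝ := ⨆ t : ℝ, (t * z - cBeta β t)

lemma Zpos (β t : ℝ) : 0 < 1 + Real.exp (-β) * (Real.exp t + Real.exp (-t)) := by positivity

lemma Dpos (β : ℝ) : 0 < 1 + 2 * Real.exp (-β) := by positivity

lemma cBeta_eq (β t : ℝ) : cBeta β t =
    Real.log (1 + Real.exp (-β) * (Real.exp t + Real.exp (-t)))
      - Real.log (1 + 2 * Real.exp (-β)) :=
  Real.log_div (Zpos β t).ne' (Dpos β).ne'

lemma cBeta_bound (β z t : ℝ) (hz : |z| ≤ 1) :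
    t * z - cBeta β t ≤ β + Real.log (1 + 2 * Real.exp (-β)) := by
  have h1 : Real.exp (-β) * Real.exp |t| ≤ 1 + Real.exp (-β) * (Real.exp t + Real.exp (-t)) := by
    have : Real.exp |t| ≤ Real.exp t + Real.exp (-t) := by
      rcases abs_cases t with ⟨h, _⟩ | ⟨h, _⟩ <;> rw [h] <;>
        nlinarith [Real.exp_pos t, Real.exp_pos (-t)]
    nlinarith [Real.exp_pos (-β), Real.exp_pos |t|]
  have h2 : Real.log (Real.exp (-β) * Real.exp |t|)
      ≤ Real.log (1 + Real.exp (-β) * (Real.exp t + Real.exp (-t))) :=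
    Real.log_le_log (by positivity) h1
  rw [Real.log_mul (Real.exp_pos _).ne' (Real.exp_pos _).ne', Real.log_exp, Real.log_exp] at h2
  have h3 : t * z ≤ |t| := by
    calc t * z ≤ |t * z| := le_abs_self _
    _ = |t| * |z| := abs_mul t z
    _ ≤ |t| * 1 := by nlinarith [abs_nonneg t]
    _ = |t| := mul_one _
  rw [cBeta_eq]
  linarith

lemma bddJ (β z : ℝ) (hz : |z| ≤ 1) : BddAbove (Set.range fun t : ℝ => t * z - cBeta β t) :=
  ⟨β + Real.log (1 + 2 * Real.exp (-β)), by rintro _ ⟨t, rfl⟩; exact cBeta_bound β z t hz⟩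

lemma gibbs_term (x p q : ℝ) (hx : 0 ≤ x) (hp : 0 < p) (hq : 0 < q) :
    x * Real.log (x / q) = x * Real.log (x / p) + x * Real.log (p / q) := by
  rcases eq_or_lt_of_le hx with h | h
  · simp [← h]
  · rw [Real.log_div h.ne' hq.ne', Real.log_div h.ne' hp.ne', Real.log_div hp.ne' hq.ne']
    ring

lemma entropy_ineq (x y : ℝ) (hx : 0 ≤ x) (hy : 0 < y) : x - y ≤ x * Real.log (x / y) := by
  rcases eq_or_lt_of_le hx with h | h
  · simp [← h]; linarith
  · have h1 : Real.log (y / x) ≤ y / x - 1 := Real.log_le_sub_one_of_pos (by positivity)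
    have h2 : Real.log (x / y) = -Real.log (y / x) := by
      rw [← Real.log_inv]; congr 1; field_simp
    rw [h2]
    have : y / x - 1 = (y - x) / x := by field_simp
    rw [this] at h1
    have := mul_le_mul_of_nonneg_left h1 hx
    rw [mul_div_cancel₀ _ h.ne'] at this
    linarith

-- log of ratio identities for the tilted measure
lemma log_ratio_pm (β t : ℝ) (s : ℝ) :
    Real.log ((Real.exp (-β) / (1 + 2 * Real.exp (-β))) /
      (Real.exp (-β) * Real.exp s / (1 + Real.exp (-β) * (Real.exp t + Real.exp (-t)))))
      = -s + cBeta β t := by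
  have hE := Real.exp_pos (-β)
  have hs := Real.exp_pos s
  have hZ := Zpos β t
  have hD := Dpos β
  have : (Real.exp (-β) / (1 + 2 * Real.exp (-β))) /
      (Real.exp (-β) * Real.exp s / (1 + Real.exp (-β) * (Real.exp t + Real.exp (-t))))
      = ((1 + Real.exp (-β) * (Real.exp t + Real.exp (-t))) / (1 + 2 * Real.exp (-β)))
        / Real.exp s := by
    field_simp
  rw [this, Real.log_div (by positivity) hs.ne', Real.log_exp, cBeta]
  ring

lemma log_ratio_mid (β t : ℝ) :
    Real.log ((1 / (1 + 2 * Real.exp (-β))) /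
      (1 / (1 + Real.exp (-β) * (Real.exp t + Real.exp (-t)))))
      = cBeta β t := by
  have hZ := Zpos β t
  have hD := Dpos β
  have : (1 / (1 + 2 * Real.exp (-β))) /
      (1 / (1 + Real.exp (-β) * (Real.exp t + Real.exp (-t))))
      = ((1 + Real.exp (-β) * (Real.exp t + Real.exp (-t))) / (1 + 2 * Real.exp (-β))) := by
    field_simp
  rw [this, cBeta]

/-- Easy direction: `t·mean(μ) − c_β(t) ≤ R(μ|ρ_β)`. -/
lemma easy_dir (β t : ℝ) (μ : ℝ × ℝ × ℝ) (hμ : IsProbVec μ) :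
    t * (μ.2.2 - μ.1) - cBeta β t ≤ relEntB β μ := by
  obtain ⟨h1, h2, h3, hsum⟩ := hμ
  have hE := Real.exp_pos (-β)
  have hZ := Zpos β t
  have hD := Dpos β
  set Z := 1 + Real.exp (-β) * (Real.exp t + Real.exp (-t)) with hZdef
  set a := Real.exp (-β) * Real.exp (-t) / Z with ha
  set b := (1 : ℝ) / Z with hb
  set c := Real.exp (-β) * Real.exp t / Z with hc
  have hap : 0 < a := by positivity
  have hbp : 0 < b := by positivity
  have hcp : 0 < c := by positivity
  have habc : a + b + c = 1 := by
    rw [ha, hb, hc]; field_simp; ring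
  -- rewrite relEntB via gibbs_term
  have e1 : μ.1 * Real.log (μ.1 / (rhoBeta β).1)
      = μ.1 * Real.log (μ.1 / a) + μ.1 * (-(t + cBeta β t)) := by
    have := gibbs_term μ.1 ((rhoBeta β).1) a h1 (by simp [rhoBeta]; positivity) hap
    have hr : Real.log ((rhoBeta β).1 / a) = t + cBeta β t := by
      have := log_ratio_pm β t (-t)
      simpa [rhoBeta, ha] using this
    -- x log (x/a) = x log (x/ρ) + x log (ρ/a)
    have := gibbs_term μ.1 ((rhoBeta β).1) a h1 (by simp [rhoBeta]; positivity) hap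
    rw [hr] at this
    linarith [this]
  have e2 : μ.2.1 * Real.log (μ.2.1 / (rhoBeta β).2.1)
      = μ.2.1 * Real.log (μ.2.1 / b) + μ.2.1 * (-(cBeta β t)) := by
    have hg := gibbs_term μ.2.1 ((rhoBeta β).2.1) b h2 (by simp [rhoBeta]; positivity) hbp
    have hr : Real.log ((rhoBeta β).2.1 / b) = cBeta β t := by
      have := log_ratio_mid β t
      simpa [rhoBeta, hb] using this
    rw [hr] at hg
    linarith [hg]
  have e3 : μ.2.2 * Real.log (μ.2.2 / (rhoBeta β).2.2)
      = μ.2.2 * Real.log (μ.2.2 / c) + μ.2.2 * (t - cBeta β t) := by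
    have hg := gibbs_term μ.2.2 ((rhoBeta β).2.2) c h3 (by simp [rhoBeta]; positivity) hcp
    have hr : Real.log ((rhoBeta β).2.2 / c) = -t + cBeta β t := by
      have := log_ratio_pm β t t
      simpa [rhoBeta, hc] using this
    rw [hr] at hg
    linarith [hg]
  have i1 := entropy_ineq μ.1 a h1 hap
  have i2 := entropy_ineq μ.2.1 b h2 hbp
  have i3 := entropy_ineq μ.2.2 c h3 hcp
  have key : relEntB β μ - (t * (μ.2.2 - μ.1) - cBeta β t)
      = μ.1 * Real.log (μ.1 / a) + μ.2.1 * Real.log (μ.2.1 / b) + μ.2.2 * Real.log (μ.2.2 / c)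
        + (- cBeta β t) * (μ.1 + μ.2.1 + μ.2.2) + cBeta β t := by
    rw [relEntB, e1, e2, e3]; ring
  rw [hsum] at key
  linarith

/-- The tilted measure at parameter `t`. -/
def tilted (β t : ℝ) : ℝ × ℝ × ℝ :=
  (Real.exp (-β) * Real.exp (-t) / (1 + Real.exp (-β) * (Real.exp t + Real.exp (-t))),
   1 / (1 + Real.exp (-β) * (Real.exp t + Real.exp (-t))),
   Real.exp (-β) * Real.exp t / (1 + Real.exp (-β) * (Real.exp t + Real.exp (-t))))

lemma tilted_prob (β t : ℝ) : IsProbVec (tilted β t) := by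
  have hZ := Zpos β t
  have hE := Real.exp_pos (-β)
  unfold tilted
  refine ⟨by positivity, by positivity, by positivity, ?_⟩
  field_simp
  ring

lemma tilted_relEnt (β t : ℝ) :
    relEntB β (tilted β t)
      = t * ((tilted β t).2.2 - (tilted β t).1) - cBeta β t := by
  have hZ := Zpos β t
  have hE := Real.exp_pos (-β)
  have hD := Dpos β
  have l1 : Real.log ((tilted β t).1 / (rhoBeta β).1) = -t - cBeta β t := by
    have := log_ratio_pm β t (-t)
    have h2 : Real.log ((tilted β t).1 / (rhoBeta β).1)
        = - Real.log ((rhoBeta β).1 / (tilted β t).1) := by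
      rw [← Real.log_inv]; congr 1
      rw [inv_div]
    rw [h2]
    simp only [tilted, rhoBeta]
    rw [this]
    ring
  have l2 : Real.log ((tilted β t).2.1 / (rhoBeta β).2.1) = - cBeta β t := by
    have := log_ratio_mid β t
    have h2 : Real.log ((tilted β t).2.1 / (rhoBeta β).2.1)
        = - Real.log ((rhoBeta β).2.1 / (tilted β t).2.1) := by
      rw [← Real.log_inv]; congr 1
      rw [inv_div]
    rw [h2]
    simp only [tilted, rhoBeta]
    rw [this]
  have l3 : Real.log ((tilted β t).2.2 / (rhoBeta β).2.2) = t - cBeta β t := by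
    have := log_ratio_pm β t t
    have h2 : Real.log ((tilted β t).2.2 / (rhoBeta β).2.2)
        = - Real.log ((rhoBeta β).2.2 / (tilted β t).2.2) := by
      rw [← Real.log_inv]; congr 1
      rw [inv_div]
    rw [h2]
    simp only [tilted, rhoBeta]
    rw [this]
    ring
  have hsum := (tilted_prob β t).2.2.2
  rw [relEntB, l1, l2, l3]
  linear_combination (-(cBeta β t)) * hsum


/-- The mean of the tilted measure. -/
def meanT (β t : ℝ) : ℝ := (tilted β t).2.2 - (tilted β t).1

lemma meanT_eq (β t : ℝ) : meanT β t
    = Real.exp (-β) * (Real.exp t - Real.exp (-t))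
      / (1 + Real.exp (-β) * (Real.exp t + Real.exp (-t))) := by
  rw [meanT, tilted]; ring

lemma meanT_cont (β : ℝ) : Continuous (meanT β) := by
  have : (meanT β) = fun t => Real.exp (-β) * (Real.exp t - Real.exp (-t))
      / (1 + Real.exp (-β) * (Real.exp t + Real.exp (-t))) := funext (meanT_eq β)
  rw [this]
  exact Continuous.div (by continuity) (by continuity) (fun t => (Zpos β t).ne')

lemma exp_mul_exp_neg (t : ℝ) : Real.exp t * Real.exp (-t) = 1 := by
  rw [← Real.exp_add]; simp

lemma meanT_eq2 (β t : ℝ) : meanT β t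
    = (Real.exp (-β) - Real.exp (-β) * (Real.exp (-t) * Real.exp (-t)))
      / (Real.exp (-t) + Real.exp (-β) * (1 + Real.exp (-t) * Real.exp (-t))) := by
  have hZ := (Zpos β t).ne'
  have hg : 0 < Real.exp (-t) + Real.exp (-β) * (1 + Real.exp (-t) * Real.exp (-t)) := by
    positivity
  rw [meanT_eq, div_eq_div_iff hZ hg.ne']
  have h1 := (Real.exp_pos t).ne'
  have h2 := (Real.exp_pos β).ne'
  simp only [Real.exp_neg]
  field_simp

lemma meanT_top (β : ℝ) : Filter.Tendsto (meanT β) Filter.atTop (nhds 1) := by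
  have hE := Real.exp_pos (-β)
  have h0 : Filter.Tendsto (fun t : ℝ => Real.exp (-t)) Filter.atTop (nhds 0) := by
    simpa using Real.tendsto_exp_neg_atTop_nhds_zero
  have hnum : Filter.Tendsto
      (fun t : ℝ => Real.exp (-β) - Real.exp (-β) * (Real.exp (-t) * Real.exp (-t)))
      Filter.atTop (nhds (Real.exp (-β))) := by
    have := ((h0.mul h0).const_mul (Real.exp (-β))).const_sub (Real.exp (-β))
    simpa using this
  have hden : Filter.Tendsto
      (fun t : ℝ => Real.exp (-t) + Real.exp (-β) * (1 + Real.exp (-t) * Real.exp (-t)))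
      Filter.atTop (nhds (Real.exp (-β))) := by
    have := h0.add (((h0.mul h0).const_add 1).const_mul (Real.exp (-β)))
    simpa using this
  have := hnum.div hden hE.ne'
  rw [div_self hE.ne'] at this
  have heq : (meanT β) = fun t =>
      (Real.exp (-β) - Real.exp (-β) * (Real.exp (-t) * Real.exp (-t)))
      / (Real.exp (-t) + Real.exp (-β) * (1 + Real.exp (-t) * Real.exp (-t))) :=
    funext (meanT_eq2 β)
  rw [heq]
  exact this

lemma meanT_neg (β t : ℝ) : meanT β (-t) = - meanT β t := by
  rw [meanT_eq, meanT_eq, neg_neg, add_comm (Real.exp (-t))]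
  ring

lemma meanT_bot (β : ℝ) : Filter.Tendsto (meanT β) Filter.atBot (nhds (-1)) := by
  have h1 : Filter.Tendsto (fun t : ℝ => meanT β (-t)) Filter.atBot (nhds 1) :=
    (meanT_top β).comp Filter.tendsto_neg_atBot_atTop
  have h2 : Filter.Tendsto (fun t : ℝ => - meanT β (-t)) Filter.atBot (nhds (-1)) := h1.neg
  have heq : (meanT β) = fun t => - meanT β (-t) := by
    funext t; rw [meanT_neg, neg_neg]
  rw [heq]
  exact h2

lemma cBeta_neg (β t : ℝ) : cBeta β (-t) = cBeta β t := by
  rw [cBeta, cBeta, neg_neg, add_comm (Real.exp (-t))]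

lemma f_top_eq (β t : ℝ) : t - cBeta β t
    = Real.log (1 + 2 * Real.exp (-β))
      - Real.log (Real.exp (-t) + Real.exp (-β) * (1 + Real.exp (-t) * Real.exp (-t))) := by
  have hZ := Zpos β t
  have hg : 0 < Real.exp (-t) + Real.exp (-β) * (1 + Real.exp (-t) * Real.exp (-t)) := by
    positivity
  have key : (1 + Real.exp (-β) * (Real.exp t + Real.exp (-t))) * Real.exp (-t)
      = Real.exp (-t) + Real.exp (-β) * (1 + Real.exp (-t) * Real.exp (-t)) := by
    have h := exp_mul_exp_neg t
    linear_combination Real.exp (-β) * h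
  have hlog : Real.log (Real.exp (-t) + Real.exp (-β) * (1 + Real.exp (-t) * Real.exp (-t)))
      = Real.log (1 + Real.exp (-β) * (Real.exp t + Real.exp (-t))) - t := by
    rw [← key, Real.log_mul hZ.ne' (Real.exp_pos _).ne', Real.log_exp]
    ring
  rw [cBeta_eq, hlog]
  ring

lemma f_top_tendsto (β : ℝ) : Filter.Tendsto (fun t => t - cBeta β t) Filter.atTop
    (nhds (β + Real.log (1 + 2 * Real.exp (-β)))) := by
  have hE := Real.exp_pos (-β)
  have h0 : Filter.Tendsto (fun t : ℝ => Real.exp (-t)) Filter.atTop (nhds 0) := by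
    simpa using Real.tendsto_exp_neg_atTop_nhds_zero
  have hden : Filter.Tendsto
      (fun t : ℝ => Real.exp (-t) + Real.exp (-β) * (1 + Real.exp (-t) * Real.exp (-t)))
      Filter.atTop (nhds (Real.exp (-β))) := by
    have := h0.add (((h0.mul h0).const_add 1).const_mul (Real.exp (-β)))
    simpa using this
  have hlog : Filter.Tendsto
      (fun t : ℝ => Real.log (Real.exp (-t) + Real.exp (-β) * (1 + Real.exp (-t) * Real.exp (-t))))
      Filter.atTop (nhds (Real.log (Real.exp (-β)))) := hden.log hE.ne'
  have := hlog.const_sub (Real.log (1 + 2 * Real.exp (-β)))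
  rw [Real.log_exp] at this
  have heq : (fun t => t - cBeta β t) = fun t =>
      Real.log (1 + 2 * Real.exp (-β))
      - Real.log (Real.exp (-t) + Real.exp (-β) * (1 + Real.exp (-t) * Real.exp (-t))) :=
    funext (f_top_eq β)
  rw [heq]
  convert this using 2
  ring

lemma mean_mem_Icc (μ : ℝ × ℝ × ℝ) (hμ : IsProbVec μ) :
    μ.2.2 - μ.1 ∈ Set.Icc (-1 : ℝ) 1 := by
  obtain ⟨h1, h2, h3, hsum⟩ := hμ
  constructor <;> [linarith; linarith]

/-- Hard direction: every `z ∈ [-1,1]` is achieved as the mean of a probability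
vector whose relative entropy is at most `J_β(z)`. -/
lemma hard_dir (β z : ℝ) (hz : z ∈ Set.Icc (-1 : ℝ) 1) :
    ∃ μ, IsProbVec μ ∧ μ.2.2 - μ.1 = z ∧ relEntB β μ ≤ Jbeta β z := by
  have hE := Real.exp_pos (-β)
  have hD := Dpos β
  rcases eq_or_lt_of_le hz.2 with h1 | h1
  · -- z = 1
    subst h1
    refine ⟨(0, 0, 1), ⟨le_refl 0, le_refl 0, by norm_num, by norm_num⟩, by norm_num, ?_⟩
    have hR : relEntB β (0, 0, 1) = β + Real.log (1 + 2 * Real.exp (-β)) := by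
      rw [relEntB, rhoBeta]
      norm_num [one_div, inv_div]
      rw [Real.log_div hD.ne' hE.ne', Real.log_exp]
      ring
    rw [hR, Jbeta]
    refine le_of_tendsto (f_top_tendsto β) (Filter.Eventually.of_forall fun t => ?_)
    calc t - cBeta β t = t * 1 - cBeta β t := by ring
      _ ≤ _ := le_ciSup (bddJ β 1 (by norm_num)) t
  rcases eq_or_lt_of_le hz.1 with h2 | h2
  · -- z = -1
    have h2' : z = -1 := h2.symm
    subst h2'
    refine ⟨(1, 0, 0), ⟨by norm_num, le_refl 0, le_refl 0, by norm_num⟩, by norm_num, ?_⟩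
    have hR : relEntB β (1, 0, 0) = β + Real.log (1 + 2 * Real.exp (-β)) := by
      rw [relEntB, rhoBeta]
      norm_num [one_div, inv_div]
      rw [Real.log_div hD.ne' hE.ne', Real.log_exp]
      ring
    rw [hR, Jbeta]
    have htd : Filter.Tendsto (fun t : ℝ => t * (-1 : ℝ) - cBeta β t) Filter.atBot
        (nhds (β + Real.log (1 + 2 * Real.exp (-β)))) := by
      have hcomp : Filter.Tendsto (fun t : ℝ => (-t) - cBeta β (-t)) Filter.atBot
          (nhds (β + Real.log (1 + 2 * Real.exp (-β)))) :=
        (f_top_tendsto β).comp Filter.tendsto_neg_atBot_atTop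
      have heq : (fun t : ℝ => t * (-1 : ℝ) - cBeta β t)
          = fun t : ℝ => (-t) - cBeta β (-t) := by
        funext t; rw [cBeta_neg]; ring
      rw [heq]; exact hcomp
    exact le_of_tendsto htd (Filter.Eventually.of_forall fun t =>
      le_ciSup (bddJ β (-1) (by norm_num)) t)
  · -- z ∈ (-1, 1)
    obtain ⟨b, hb⟩ := ((meanT_top β).eventually (eventually_gt_nhds h1)).exists
    obtain ⟨a, ha⟩ := ((meanT_bot β).eventually (eventually_lt_nhds h2)).exists
    have hzmem : z ∈ Set.Icc (meanT β a) (meanT β b) := ⟨ha.le, hb.le⟩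
    obtain ⟨t, ht⟩ := intermediate_value_univ a b (meanT_cont β) hzmem
    refine ⟨tilted β t, tilted_prob β t, ht, ?_⟩
    have hrel := tilted_relEnt β t
    have hmean : (tilted β t).2.2 - (tilted β t).1 = z := ht
    rw [hrel, hmean, Jbeta]
    exact le_ciSup (bddJ β z (abs_le.mpr ⟨hz.1, hz.2⟩)) t

/-- If `ν` is a global minimum point over probability vectors of
`μ ↦ R(μ|ρ_β) − βK(μ₁ − μ₋₁)²`, then `z̃ = ν₁ − ν₋₁` is a global minimum point over
`[-1,1]` of `z ↦ J_β(z) − βKz²`. -/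
theorem mean_of_min_relEntB_minimizes_J (β K : ℝ) (hβ : 0 < β) (hK : 0 < K)
    (ν : ℝ × ℝ × ℝ) (hν : IsProbVec ν)
    (hmin : IsMinOn (fun μ : ℝ × ℝ × ℝ => relEntB β μ - β * K * (μ.2.2 - μ.1) ^ 2)
      {μ | IsProbVec μ} ν) :
    (ν.2.2 - ν.1) ∈ Set.Icc (-1 : ℝ) 1 ∧
    IsMinOn (fun z => Jbeta β z - β * K * z ^ 2) (Set.Icc (-1 : ℝ) 1) (ν.2.2 - ν.1) := by

  have hmem := mean_mem_Icc ν hν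
  refine ⟨hmem, ?_⟩
  rw [isMinOn_iff]
  intro z hz
  obtain ⟨μ, hμ, hμmean, hμle⟩ := hard_dir β z hz
  have h1 : Jbeta β (ν.2.2 - ν.1) ≤ relEntB β ν := by
    rw [Jbeta]
    exact ciSup_le fun t => easy_dir β t ν hν
  have h2 : relEntB β ν - β * K * (ν.2.2 - ν.1) ^ 2
      ≤ relEntB β μ - β * K * (μ.2.2 - μ.1) ^ 2 := isMinOn_iff.mp hmin μ hμ
  rw [hμmean] at h2

  linarith
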